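/- arXiv:solv-int/9807010 — 8 statements merged into one kernel-verified Lean document; each statement's English description precedes it below -/
import Mathlib

section
/- Suppose U : X × ℝ → A is twice continuously differentiable, V, W : X × ℝ → A are continuously differentiable, K, S : X → X are differentiable vector fields, and f, g : ℝ → ℝ are differentiable. If (V, K, f) and (W, S, g) both satisfy the key discrete zero curvature equation for U, i.e. (E V)U − U V = U'[K] + f·U_λ and (E W)U − U W = U'[S] + g·U_λ (as identities in (u,λ)), then the product triple also satisfies it: (E⟦V,W⟧)U − U⟦V,W⟧ = U'[[K,S]] + ⟦f,g⟧·U_λ, where ⟦V,W⟧ := V'[S] − W'[K] + VW − WV + g·V_λ − f·W_λ, [K,S](u) := DK(u)(S(u)) − DS(u)(K(u)), and ⟦f,g⟧(λ) := f'(λ)g(λ) − f(λ)g'(λ). -/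
/-!
On `X × ℝ` the pair `(K, f)` is the product vector field `Prod.map K f`, and the key equation
reads `E(V) U − U V = DU (K, f)`. Differentiate the equation of `(V, (K, f))` along `(S, g)` and
that of `(W, (S, g))` along `(K, f)` and subtract: by symmetry of `D²U` the right-hand sides
combine into `DU` applied to the Lie bracket of the two vector fields, which is computed
componentwise and gives `([K, S], ⟦f, g⟧)`. On the left, the terms in which `U` is differentiated
once are eliminated with the key equations themselves; they then add up to
`E([V, W]) U − U [V, W]` by a Jacobi identity for the twisted commutator `a ↦ E(a) U − U a`.
-/

open VectorField

section ProductSpace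

variable {𝕜 : Type*} [NontriviallyNormedField 𝕜]
  {E₁ E₂ F : Type*} [NormedAddCommGroup E₁] [NormedSpace 𝕜 E₁]
  [NormedAddCommGroup E₂] [NormedSpace 𝕜 E₂] [NormedAddCommGroup F] [NormedSpace 𝕜 F]

theorem DifferentiableAt.fderiv_apply_eq_add_smul_deriv {φ : E₁ × 𝕜 → F} {x : E₁} {t : 𝕜}
    (h : DifferentiableAt 𝕜 φ (x, t)) (a : E₁) (b : 𝕜) :
    fderiv 𝕜 φ (x, t) (a, b)
      = fderiv 𝕜 (fun x' => φ (x', t)) x a + b • deriv (fun t' => φ (x, t')) t := by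
  have h₁ : HasFDerivAt (fun x' => φ (x', t)) ((fderiv 𝕜 φ (x, t)).comp (.inl 𝕜 E₁ 𝕜)) x :=
    h.hasFDerivAt.comp x (hasFDerivAt_prodMk_left x t)
  have h₂ : HasFDerivAt (fun t' => φ (x, t')) ((fderiv 𝕜 φ (x, t)).comp (.inr 𝕜 E₁ 𝕜)) t :=
    h.hasFDerivAt.comp t (hasFDerivAt_prodMk_right x t)
  rw [h₁.fderiv, ← fderiv_eq_smul_deriv, h₂.fderiv]
  simp [← map_add]

theorem lieBracket_prodMap {V₁ W₁ : E₁ → E₁} {V₂ W₂ : E₂ → E₂} {p : E₁ × E₂}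
    (hV₁ : DifferentiableAt 𝕜 V₁ p.1) (hV₂ : DifferentiableAt 𝕜 V₂ p.2)
    (hW₁ : DifferentiableAt 𝕜 W₁ p.1) (hW₂ : DifferentiableAt 𝕜 W₂ p.2) :
    lieBracket 𝕜 (Prod.map V₁ V₂) (Prod.map W₁ W₂) p
      = (lieBracket 𝕜 V₁ W₁ p.1, lieBracket 𝕜 V₂ W₂ p.2) := by
  ext <;> simp [lieBracket, (hV₁.hasFDerivAt.prodMap p hV₂.hasFDerivAt).fderiv,
    (hW₁.hasFDerivAt.prodMap p hW₂.hasFDerivAt).fderiv]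

end ProductSpace

theorem twisted_commutator_jacobi {R F : Type*} [Ring R] [FunLike F R R] [RingHomClass F R R]
    (σ : F) (a b u : R) :
    σ a * (σ b * u - u * b) - (σ b * u - u * b) * a
        - (σ b * (σ a * u - u * a) - (σ a * u - u * a) * b)
      = σ (a * b - b * a) * u - u * (a * b - b * a) := by
  rw [map_sub, map_mul, map_mul]
  noncomm_ring

section VectorFields

variable {Y A : Type*} [NormedAddCommGroup Y] [NormedSpace ℝ Y] [NormedRing A] [NormedAlgebra ℝ A]

theorem fderiv_twisted_commutator_apply (E : A →A[ℝ] A) {U V : Y → A} {y : Y}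
    (hU : DifferentiableAt ℝ U y) (hV : DifferentiableAt ℝ V y) (w : Y) :
    fderiv ℝ (fun y => E (V y) * U y - U y * V y) y w
      = E (fderiv ℝ V y w) * U y + E (V y) * fderiv ℝ U y w
        - (fderiv ℝ U y w * V y + U y * fderiv ℝ V y w) := by
  have hEV : HasFDerivAt (fun y => E (V y)) (E.toContinuousLinearMap.comp (fderiv ℝ V y)) y :=
    E.toContinuousLinearMap.hasFDerivAt.comp y hV.hasFDerivAt
  have h : HasFDerivAt (fun y => E (V y) * U y - U y * V y) _ y :=
    (hEV.mul' hU.hasFDerivAt).sub (hU.hasFDerivAt.mul' hV.hasFDerivAt)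
  rw [h.fderiv]
  simp [add_comm]

theorem twisted_commutator_eq_fderiv_lieBracket (E : A →A[ℝ] A) {U V W : Y → A} {Z₁ Z₂ : Y → Y}
    (hU : ContDiff ℝ 2 U) (hV : Differentiable ℝ V) (hW : Differentiable ℝ W)
    (hZ₁ : Differentiable ℝ Z₁) (hZ₂ : Differentiable ℝ Z₂)
    (hVZ : ∀ y, E (V y) * U y - U y * V y = fderiv ℝ U y (Z₁ y))
    (hWZ : ∀ y, E (W y) * U y - U y * W y = fderiv ℝ U y (Z₂ y)) (y : Y) :
    E (fderiv ℝ V y (Z₂ y) - fderiv ℝ W y (Z₁ y) + (V y * W y - W y * V y)) * U y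
        - U y * (fderiv ℝ V y (Z₂ y) - fderiv ℝ W y (Z₁ y) + (V y * W y - W y * V y))
      = fderiv ℝ U y (lieBracket ℝ Z₂ Z₁ y) := by
  have hUd : Differentiable ℝ U := hU.differentiable (by norm_num)
  rw [fderiv_apply_lieBracket hU.contDiffAt (by simp) (hZ₁ y) (hZ₂ y),
    ← funext hVZ, ← funext hWZ, fderiv_twisted_commutator_apply E (hUd y) (hV y),
    fderiv_twisted_commutator_apply E (hUd y) (hW y), ← hVZ, ← hWZ]
  linear_combination (norm := skip) twisted_commutator_jacobi E (V y) (W y) (U y)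
  simp only [map_add, map_sub, map_mul]
  noncomm_ring

end VectorFields

theorem product_key_discrete_zero_curvature
    {X A : Type*} [NormedAddCommGroup X] [NormedSpace ℝ X]
    [NormedRing A] [NormedAlgebra ℝ A]
    (E : A →ₐ[ℝ] A) (hE : Continuous E)
    (U V W : X × ℝ → A) (K S : X → X) (f g : ℝ → ℝ)
    (hU : ContDiff ℝ 2 U) (hV : ContDiff ℝ 1 V) (hW : ContDiff ℝ 1 W)
    (hK : Differentiable ℝ K) (hS : Differentiable ℝ S)
    (hf : Differentiable ℝ f) (hg : Differentiable ℝ g)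
    -- (E V)U − U V = U'[K] + f·U_λ
    (hVK : ∀ (u : X) (l : ℝ),
      E (V (u, l)) * U (u, l) - U (u, l) * V (u, l)
        = fderiv ℝ (fun x => U (x, l)) u (K u)
          + f l • deriv (fun m => U (u, m)) l)
    -- (E W)U − U W = U'[S] + g·U_λ
    (hWS : ∀ (u : X) (l : ℝ),
      E (W (u, l)) * U (u, l) - U (u, l) * W (u, l)
        = fderiv ℝ (fun x => U (x, l)) u (S u)
          + g l • deriv (fun m => U (u, m)) l) :
    -- (E⟦V,W⟧)U − U⟦V,W⟧ = U'[[K,S]] + ⟦f,g⟧·U_λ, where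
    -- ⟦V,W⟧ = V'[S] − W'[K] + VW − WV + g·V_λ − f·W_λ
    ∀ (u : X) (l : ℝ),
      E (fderiv ℝ (fun x => V (x, l)) u (S u)
            - fderiv ℝ (fun x => W (x, l)) u (K u)
            + (V (u, l) * W (u, l) - W (u, l) * V (u, l))
            + g l • deriv (fun m => V (u, m)) l
            - f l • deriv (fun m => W (u, m)) l) * U (u, l)
        - U (u, l) * (fderiv ℝ (fun x => V (x, l)) u (S u)
            - fderiv ℝ (fun x => W (x, l)) u (K u)
            + (V (u, l) * W (u, l) - W (u, l) * V (u, l))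
            + g l • deriv (fun m => V (u, m)) l
            - f l • deriv (fun m => W (u, m)) l)
        = fderiv ℝ (fun x => U (x, l)) u
            (fderiv ℝ K u (S u) - fderiv ℝ S u (K u))
          + (deriv f l * g l - f l * deriv g l) • deriv (fun m => U (u, m)) l := by
  intro u l
  have hUd : Differentiable ℝ U := hU.differentiable (by norm_num)
  have hVd : Differentiable ℝ V := hV.differentiable one_ne_zero
  have hWd : Differentiable ℝ W := hW.differentiable one_ne_zero
  have hUtotal : ∀ (Q : X × ℝ → A) (T : X → X) (h : ℝ → ℝ),
      (∀ u l, E (Q (u, l)) * U (u, l) - U (u, l) * Q (u, l)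
        = fderiv ℝ (fun x => U (x, l)) u (T u) + h l • deriv (fun m => U (u, m)) l) →
      ∀ q, E (Q q) * U q - U q * Q q = fderiv ℝ U q (Prod.map T h q) := by
    rintro Q T h hQ ⟨x, t⟩
    rw [Prod.map_apply, (hUd _).fderiv_apply_eq_add_smul_deriv]
    exact hQ x t
  have key := twisted_commutator_eq_fderiv_lieBracket ⟨E, hE⟩ (Z₁ := Prod.map K f) (Z₂ := Prod.map S g) hU hVd hWd (fun p => (hK p.1).prodMap p (hf p.2))
    (fun p => (hS p.1).prodMap p (hg p.2))
    (hUtotal V K f hVK) (hUtotal W S g hWS) (u, l)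
  rw [lieBracket_prodMap (hS u) (hg l) (hK u) (hf l), Prod.map_apply, Prod.map_apply,
    (hUd _).fderiv_apply_eq_add_smul_deriv, (hVd _).fderiv_apply_eq_add_smul_deriv,
    (hWd _).fderiv_apply_eq_add_smul_deriv] at key
  convert key using 4
  · exact congrArg E (by abel)
  · abel
  · rfl
  · simp only [lieBracket, fderiv_eq_smul_deriv, smul_eq_mul]
    ring
end

section
/- Suppose U : X × ℝ → A is twice continuously differentiable, V, W : X × ℝ → A are continuously differentiable, K, S : X → X are differentiable vector fields, and g : ℝ → ℝ is differentiable. If (V, K, 0) satisfies the key discrete zero curvature equation for U with zero spectral law (i.e. (E V)U − U V = U'[K], the isospectral case) and (W, S, g) satisfies (E W)U − U W = U'[S] + g·U_λ, then the product Lax operator ⟦V,W⟧ := V'[S] − W'[K] + VW − WV + g·V_λ is again isospectral: (E⟦V,W⟧)U − U⟦V,W⟧ = U'[[K,S]], where [K,S](u) := DK(u)(S(u)) − DS(u)(K(u)). In other words, the product equation u_t = [K,S] of an isospectral equation with any equation admitting a zero curvature representation is again isospectral. -/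
/-!
Regard the spectral parameter as a coordinate: on `X × ℝ` the two zero curvature equations read
`(E V)U − U V = U'[K̃]` and `(E W)U − U W = U'[S̃]` for the vector fields `K̃ = K × 0` and
`S̃ = S × g`, and the product Lax operator is `V'[S̃] − W'[K̃] + [V, W]`. Differentiating the first
equation along `S̃`, the second along `K̃` and subtracting, the second derivatives of `U` cancel by
symmetry, and substituting the equations back leaves `U'[[K̃, S̃]]`. Since `K̃` has no
`λ`-component, `[K̃, S̃] = [K, S] × 0`, so `g` drops out of the spectral law.
-/

open VectorField

/-- `twistedComm E (U q) (V q)` is the left-hand side `(E V)U − U V` of the zero curvature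
equation. -/
def twistedComm {R F : Type*} [Ring R] [FunLike F R R] (e : F) (u a : R) : R :=
  e a * u - u * a

theorem twistedComm_sub_add_commutator {R F : Type*} [Ring R] [FunLike F R R]
    [RingHomClass F R R] (e : F) (u v w a b : R) :
    twistedComm e u (a - b + (v * w - w * v))
      = (twistedComm e u a + (e v * twistedComm e u w - twistedComm e u w * v))
        - (twistedComm e u b + (e w * twistedComm e u v - twistedComm e u v * w)) := by
  simp only [twistedComm, map_sub, map_add, map_mul]
  noncomm_ring

section Derivatives

variable {𝕜 Y A : Type*} [NontriviallyNormedField 𝕜]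
  [NormedAddCommGroup Y] [NormedSpace 𝕜 Y] [NormedRing A] [NormedAlgebra 𝕜 A]

theorem fderiv_twistedComm_apply (E : A →ₐ[𝕜] A) (hE : Continuous E) {U F : Y → A} {q : Y}
    (hU : DifferentiableAt 𝕜 U q) (hF : DifferentiableAt 𝕜 F q) (w : Y) :
    fderiv 𝕜 (fun y => twistedComm E (U y) (F y)) q w
      = twistedComm E (U q) (fderiv 𝕜 F q w)
        + (E (F q) * fderiv 𝕜 U q w - fderiv 𝕜 U q w * F q) := by
  let Ecl : A →L[𝕜] A := ⟨E.toLinearMap, hE⟩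
  have hEF : HasFDerivAt (fun y => E (F y)) (Ecl.comp (fderiv 𝕜 F q)) q :=
    Ecl.hasFDerivAt.comp q hF.hasFDerivAt
  have hZ : HasFDerivAt (fun y => twistedComm E (U y) (F y)) _ q :=
    (hEF.mul' hU.hasFDerivAt).sub (hU.hasFDerivAt.mul' hF.hasFDerivAt)
  rw [hZ.fderiv]
  simp only [twistedComm, sub_apply, add_apply, smul_apply, ContinuousLinearMap.comp_apply,
    smul_eq_mul, MulOpposite.smul_eq_mul_unop, MulOpposite.unop_op]
  change _ + E _ * _ - _ = _
  abel

theorem twistedComm_productLax_eq_fderiv_lieBracket (E : A →ₐ[𝕜] A) (hE : Continuous E)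
    {U V W : Y → A} {K S : Y → Y} {q : Y}
    (hU : DifferentiableAt 𝕜 U q) (hV : DifferentiableAt 𝕜 V q) (hW : DifferentiableAt 𝕜 W q)
    (hDU : DifferentiableAt 𝕜 (fderiv 𝕜 U) q) (hU_symm : IsSymmSndFDerivAt 𝕜 U q)
    (hK : DifferentiableAt 𝕜 K q) (hS : DifferentiableAt 𝕜 S q)
    (hVK : (fun y => twistedComm E (U y) (V y)) = fun y => fderiv 𝕜 U y (K y))
    (hWS : (fun y => twistedComm E (U y) (W y)) = fun y => fderiv 𝕜 U y (S y)) :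
    twistedComm E (U q) (fderiv 𝕜 V q (S q) - fderiv 𝕜 W q (K q) + (V q * W q - W q * V q))
      = fderiv 𝕜 U q (lieBracket 𝕜 S K q) := by
  have hVS := congrArg (fun f => fderiv 𝕜 f q (S q)) hVK
  have hWK := congrArg (fun f => fderiv 𝕜 f q (K q)) hWS
  simp only [fderiv_twistedComm_apply E hE hU hV, fderiv_twistedComm_apply E hE hU hW,
    fderiv_clm_apply hDU hK, fderiv_clm_apply hDU hS, add_apply, ContinuousLinearMap.comp_apply,
    ContinuousLinearMap.flip_apply] at hVS hWK
  rw [← congrFun hWS q] at hVS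
  rw [← congrFun hVK q] at hWK
  calc _ = (fderiv 𝕜 U q (fderiv 𝕜 K q (S q)) + fderiv 𝕜 (fderiv 𝕜 U) q (S q) (K q))
        - (fderiv 𝕜 U q (fderiv 𝕜 S q (K q)) + fderiv 𝕜 (fderiv 𝕜 U) q (K q) (S q)) := by
        rw [← hVS, ← hWK]
        exact twistedComm_sub_add_commutator E _ _ _ _ _
    _ = _ := by rw [hU_symm.eq, lieBracket, map_sub]; abel

end Derivatives

section Product

variable {𝕜 X Z G : Type*} [NontriviallyNormedField 𝕜]
  [NormedAddCommGroup X] [NormedSpace 𝕜 X] [NormedAddCommGroup Z] [NormedSpace 𝕜 Z]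
  [NormedAddCommGroup G] [NormedSpace 𝕜 G]

theorem fderiv_apply_eq_partial_add_smul_partial {F : X × 𝕜 → G} {u : X} {l : 𝕜}
    (hF : DifferentiableAt 𝕜 F (u, l)) (v : X) (c : 𝕜) :
    fderiv 𝕜 F (u, l) (v, c)
      = fderiv 𝕜 (fun x => F (x, l)) u v + c • deriv (fun m => F (u, m)) l := by
  have hx : HasFDerivAt (fun x => F (x, l))
      ((fderiv 𝕜 F (u, l)).comp (ContinuousLinearMap.inl 𝕜 X 𝕜)) u :=
    hF.hasFDerivAt.comp u (hasFDerivAt_prodMk_left u l)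
  have hl : HasDerivAt (fun m => F (u, m)) (fderiv 𝕜 F (u, l) (0, 1)) l :=
    hF.hasFDerivAt.comp_hasDerivAt l ((hasDerivAt_const l u).prodMk (hasDerivAt_id l))
  rw [hx.fderiv, hl.deriv, ContinuousLinearMap.comp_apply, ← map_smul, ← map_add]
  simp

theorem lieBracket_prodMap_s1 {S K : X → X} {s k : Z → Z} {p : X × Z}
    (hS : DifferentiableAt 𝕜 S p.1) (hK : DifferentiableAt 𝕜 K p.1)
    (hs : DifferentiableAt 𝕜 s p.2) (hk : DifferentiableAt 𝕜 k p.2) :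
    lieBracket 𝕜 (Prod.map S s) (Prod.map K k) p
      = (lieBracket 𝕜 S K p.1, lieBracket 𝕜 s k p.2) := by
  rw [lieBracket, (hK.hasFDerivAt.prodMap p hk.hasFDerivAt).fderiv,
    (hS.hasFDerivAt.prodMap p hs.hasFDerivAt).fderiv]
  rfl

end Product

theorem product_with_isospectral_is_isospectral
    {X A : Type*} [NormedAddCommGroup X] [NormedSpace ℝ X]
    [NormedRing A] [NormedAlgebra ℝ A]
    (E : A →ₐ[ℝ] A) (hE : Continuous E)
    (U V W : X × ℝ → A) (K S : X → X) (g : ℝ → ℝ)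
    (hU : ContDiff ℝ 2 U) (hV : ContDiff ℝ 1 V) (hW : ContDiff ℝ 1 W)
    (hK : Differentiable ℝ K) (hS : Differentiable ℝ S)
    (hg : Differentiable ℝ g)
    -- isospectral case: (E V)U − U V = U'[K]  (spectral law f = 0)
    (hVK : ∀ (u : X) (l : ℝ),
      E (V (u, l)) * U (u, l) - U (u, l) * V (u, l)
        = fderiv ℝ (fun x => U (x, l)) u (K u))
    -- (E W)U − U W = U'[S] + g·U_λ
    (hWS : ∀ (u : X) (l : ℝ),
      E (W (u, l)) * U (u, l) - U (u, l) * W (u, l)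
        = fderiv ℝ (fun x => U (x, l)) u (S u)
          + g l • deriv (fun m => U (u, m)) l) :
    -- (E⟦V,W⟧)U − U⟦V,W⟧ = U'[[K,S]], with ⟦V,W⟧ = V'[S] − W'[K] + VW − WV + g·V_λ
    ∀ (u : X) (l : ℝ),
      E (fderiv ℝ (fun x => V (x, l)) u (S u)
            - fderiv ℝ (fun x => W (x, l)) u (K u)
            + (V (u, l) * W (u, l) - W (u, l) * V (u, l))
            + g l • deriv (fun m => V (u, m)) l) * U (u, l)
        - U (u, l) * (fderiv ℝ (fun x => V (x, l)) u (S u)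
            - fderiv ℝ (fun x => W (x, l)) u (K u)
            + (V (u, l) * W (u, l) - W (u, l) * V (u, l))
            + g l • deriv (fun m => V (u, m)) l)
        = fderiv ℝ (fun x => U (x, l)) u
            (fderiv ℝ K u (S u) - fderiv ℝ S u (K u)) := by
  intro u l
  have hUd : Differentiable ℝ U := hU.differentiable two_ne_zero
  have hVd : Differentiable ℝ V := hV.differentiable one_ne_zero
  have hWd : Differentiable ℝ W := hW.differentiable one_ne_zero
  have hVK' : (fun q => twistedComm E (U q) (V q))
      = fun q => fderiv ℝ U q (Prod.map K (0 : ℝ → ℝ) q) := by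
    funext ⟨x, m⟩
    simp [twistedComm, hVK, fderiv_apply_eq_partial_add_smul_partial (hUd (x, m))]
  have hWS' : (fun q => twistedComm E (U q) (W q)) = fun q => fderiv ℝ U q (Prod.map S g q) := by
    funext ⟨x, m⟩
    simp [twistedComm, hWS, fderiv_apply_eq_partial_add_smul_partial (hUd (x, m))]
  have key := twistedComm_productLax_eq_fderiv_lieBracket E hE (K := Prod.map K 0)
    (S := Prod.map S g) (hUd (u, l)) (hVd (u, l)) (hWd (u, l)) ((hU.fderiv_right le_rfl).differentiable one_ne_zero (u, l))
    (hU.contDiffAt.isSymmSndFDerivAt (by simp))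
    ((hK u).prodMap (u, l) (differentiableAt_const 0)) ((hS u).prodMap (u, l) (hg l)) hVK' hWS'
  rw [lieBracket_prodMap_s1 (k := 0) (hS u) (hK u) (hg l) (differentiableAt_const 0),
    lieBracket_zero_right] at key
  simp only [Prod.map_apply, Pi.zero_apply,
    fderiv_apply_eq_partial_add_smul_partial (hVd (u, l)),
    fderiv_apply_eq_partial_add_smul_partial (hWd (u, l)),
    fderiv_apply_eq_partial_add_smul_partial (hUd (u, l)), zero_smul, add_zero] at key
  refine (congrArg (twistedComm E (U (u, l))) ?_).trans key
  abel
end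

section
/- Fix u ∈ X and for each λ ∈ ℝ let D_λ : X → A denote the Fréchet derivative of U(·,λ) at u. Suppose K₀ ∈ X and V₀ : ℝ → A satisfy the initial isospectral equation (E V₀(λ))·U(u,λ) − U(u,λ)·V₀(λ) = D_λ(K₀) for all λ, and suppose Ω : X × ℝ → A solves the characteristic operator equation (E Ω(ξ,λ))·U(u,λ) − U(u,λ)·Ω(ξ,λ) = D_λ(Φ ξ) − λ·D_λ(ξ) for all ξ ∈ X and all λ. Define K_k := Φᵏ K₀ and V_k(λ) := λᵏ·V₀(λ) + Σ_{i=1}^{k} λ^{k−i}·Ω(K_{i−1}, λ). Then for every k ≥ 0 and every λ: (E V_k(λ))·U(u,λ) − U(u,λ)·V_k(λ) = D_λ(K_k); i.e. each V_k is an isospectral (λ_t = 0) Lax operator for the flow u_t = K_k. -/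
/-! The operators satisfy `V_{k+1}(λ) = λ • V_k(λ) + Ω(K_k, λ)`, and `V ↦ (E V) U − U V` is
`ℝ`-linear; applying it to this recursion, the term `λ • D_λ(K_k)` coming from `V_k` cancels the
one in the characteristic equation for `Ω(K_k, λ)`, leaving `D_λ(Φ K_k) = D_λ(K_{k+1})`. -/

open Finset

section LaxRecursion

variable {R M : Type*} [CommSemiring R] [AddCommMonoid M] [Module R M]

theorem pow_smul_add_sum_range_succ (l : R) (v : M) (w : ℕ → M) (k : ℕ) :
    l ^ (k + 1) • v + ∑ i ∈ range (k + 1), l ^ (k + 1 - 1 - i) • w i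
      = l • (l ^ k • v + ∑ i ∈ range k, l ^ (k - 1 - i) • w i) + w k := by
  have hsum : ∑ i ∈ range k, l ^ (k - i) • w i = l • ∑ i ∈ range k, l ^ (k - 1 - i) • w i := by
    rw [smul_sum]
    refine sum_congr rfl fun i hi => ?_
    rw [smul_smul, ← pow_succ']
    congr 2
    have := mem_range.mp hi
    omega
  rw [sum_range_succ, Nat.add_sub_cancel, Nat.sub_self, pow_zero, one_smul, hsum, smul_add,
    smul_smul, ← pow_succ', add_assoc]

variable {N P : Type*} [AddCommGroup N] [Module R N]

theorem map_pow_smul_add_sum_iterate_eq {L : M →ₗ[R] N} {D : P → N} {Φ : P → P} {w : P → M}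
    {v₀ : M} {K₀ : P} {l : R} (hv₀ : L v₀ = D K₀) (hw : ∀ ξ, L (w ξ) = D (Φ ξ) - l • D ξ)
    (k : ℕ) :
    L (l ^ k • v₀ + ∑ i ∈ range k, l ^ (k - 1 - i) • w (Φ^[i] K₀)) = D (Φ^[k] K₀) := by
  induction k with
  | zero => simpa using hv₀
  | succ k ih =>
    rw [pow_smul_add_sum_range_succ, map_add, map_smul, ih, hw, Function.iterate_succ_apply']
    abel

end LaxRecursion

/-- The map `V ↦ (E V) a − a V`; for `a = U(u, λ)` it is the left-hand side of the Lax equation. -/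
def twistedCommutator {R A : Type*} [CommSemiring R] [Ring A] [Algebra R A] (E : A →ₐ[R] A)
    (a : A) : A →ₗ[R] A :=
  LinearMap.mulRight R a ∘ₗ E.toLinearMap - LinearMap.mulLeft R a

theorem isospectral_hierarchy_lax_operators_general
    {X A : Type*} [NormedAddCommGroup X] [NormedSpace ℝ X]
    [NormedRing A] [NormedAlgebra ℝ A]
    (E : A →ₐ[ℝ] A)
    (U : X × ℝ → A) (Φ : X →ₗ[ℝ] X) (u : X)
    (K₀ : X) (V₀ : ℝ → A) (Ω : X × ℝ → A)
    -- initial isospectral equation: (E V₀(λ))U(u,λ) − U(u,λ)V₀(λ) = D_λ(K₀)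
    (hV₀ : ∀ l : ℝ,
      E (V₀ l) * U (u, l) - U (u, l) * V₀ l
        = fderiv ℝ (fun x => U (x, l)) u K₀)
    -- characteristic operator equation:
    -- (E Ω(ξ,λ))U(u,λ) − U(u,λ)Ω(ξ,λ) = D_λ(Φξ) − λ·D_λ(ξ)
    (hΩ : ∀ (ξ : X) (l : ℝ),
      E (Ω (ξ, l)) * U (u, l) - U (u, l) * Ω (ξ, l)
        = fderiv ℝ (fun x => U (x, l)) u (Φ ξ)
          - l • fderiv ℝ (fun x => U (x, l)) u ξ) :
    -- conclusion: (E V_k)U − U V_k = D_λ(K_k) for all k ≥ 0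
    ∀ (k : ℕ) (l : ℝ),
      E (l ^ k • V₀ l
            + ∑ i ∈ Finset.range k, l ^ (k - 1 - i) • Ω ((Φ ^ i) K₀, l)) * U (u, l)
        - U (u, l) * (l ^ k • V₀ l
            + ∑ i ∈ Finset.range k, l ^ (k - 1 - i) • Ω ((Φ ^ i) K₀, l))
        = fderiv ℝ (fun x => U (x, l)) u ((Φ ^ k) K₀) := by
  intro k l
  simp only [Module.End.pow_apply]
  exact map_pow_smul_add_sum_iterate_eq (L := twistedCommutator E (U (u, l)))
    (w := fun ξ => Ω (ξ, l)) (hV₀ l) (fun ξ => hΩ ξ l) k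

theorem isospectral_hierarchy_lax_operators
    {X A : Type*} [NormedAddCommGroup X] [NormedSpace ℝ X]
    [NormedRing A] [NormedAlgebra ℝ A]
    (E : A →ₐ[ℝ] A) (hE : Continuous E)
    (U : X × ℝ → A) (Φ : X →ₗ[ℝ] X) (u : X)
    (hU : ∀ l : ℝ, ContDiff ℝ 1 (fun x => U (x, l)))
    (K₀ : X) (V₀ : ℝ → A) (Ω : X × ℝ → A)
    -- initial isospectral equation: (E V₀(λ))U(u,λ) − U(u,λ)V₀(λ) = D_λ(K₀)
    (hV₀ : ∀ l : ℝ,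
      E (V₀ l) * U (u, l) - U (u, l) * V₀ l
        = fderiv ℝ (fun x => U (x, l)) u K₀)
    -- characteristic operator equation:
    -- (E Ω(ξ,λ))U(u,λ) − U(u,λ)Ω(ξ,λ) = D_λ(Φξ) − λ·D_λ(ξ)
    (hΩ : ∀ (ξ : X) (l : ℝ),
      E (Ω (ξ, l)) * U (u, l) - U (u, l) * Ω (ξ, l)
        = fderiv ℝ (fun x => U (x, l)) u (Φ ξ)
          - l • fderiv ℝ (fun x => U (x, l)) u ξ) :
    -- conclusion: (E V_k)U − U V_k = D_λ(K_k) for all k ≥ 0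
    ∀ (k : ℕ) (l : ℝ),
      E (l ^ k • V₀ l
            + ∑ i ∈ Finset.range k, l ^ (k - 1 - i) • Ω ((Φ ^ i) K₀, l)) * U (u, l)
        - U (u, l) * (l ^ k • V₀ l
            + ∑ i ∈ Finset.range k, l ^ (k - 1 - i) • Ω ((Φ ^ i) K₀, l))
        = fderiv ℝ (fun x => U (x, l)) u ((Φ ^ k) K₀) :=
  isospectral_hierarchy_lax_operators_general E U Φ u K₀ V₀ Ω hV₀ hΩ
end

section
/- Assume U : X × ℝ → A is continuously differentiable, the triple (V, K, f) satisfies the key discrete zero curvature equation for U, and U has the injective property: for every (x,λ) ∈ X × ℝ the Fréchet derivative D_u U(x,λ) : X → A is injective. Let u : ℝ → X and Λ : ℝ → ℝ be differentiable curves with Λ'(t) = f(Λ(t)) for all t, and suppose the discrete zero curvature equation holds along the curve: d/dt [U(u(t),Λ(t))] = (E V(u(t),Λ(t)))·U(u(t),Λ(t)) − U(u(t),Λ(t))·V(u(t),Λ(t)) for all t. Then u solves the lattice equation: u'(t) = K(u(t)) for all t. -/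
section PartialDerivatives

variable {𝕜 X A : Type*} [NontriviallyNormedField 𝕜] [NormedAddCommGroup X] [NormedSpace 𝕜 X]
  [NormedAddCommGroup A] [NormedSpace 𝕜 A] {U : X × 𝕜 → A} {x : X} {l : 𝕜}

theorem DifferentiableAt.fderiv_partial_fst_apply (hU : DifferentiableAt 𝕜 U (x, l)) (v : X) :
    fderiv 𝕜 (fun y => U (y, l)) x v = fderiv 𝕜 U (x, l) (v, 0) := by
  have hpartial : HasFDerivAt (fun y => U (y, l))
      ((fderiv 𝕜 U (x, l)).comp (ContinuousLinearMap.inl 𝕜 X 𝕜)) x :=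
    hU.hasFDerivAt.comp x (hasFDerivAt_prodMk_left x l)
  rw [hpartial.fderiv]
  rfl

theorem DifferentiableAt.deriv_partial_snd (hU : DifferentiableAt 𝕜 U (x, l)) :
    deriv (fun m => U (x, m)) l = fderiv 𝕜 U (x, l) (0, 1) :=
  (hU.hasFDerivAt.comp_hasDerivAt l ((hasDerivAt_const l x).prodMk (hasDerivAt_id l))).deriv

theorem DifferentiableAt.hasDerivAt_comp_prodMk {u : 𝕜 → X} {Λ : 𝕜 → 𝕜} {t c : 𝕜} {v : X}
    (hU : DifferentiableAt 𝕜 U (u t, Λ t)) (hu : HasDerivAt u v t) (hΛ : HasDerivAt Λ c t) :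
    HasDerivAt (fun s => U (u s, Λ s))
      (fderiv 𝕜 (fun y => U (y, Λ t)) (u t) v + c • deriv (fun m => U (u t, m)) (Λ t)) t := by
  have hsplit : ((v, c) : X × 𝕜) = (v, 0) + c • (0, 1) := by simp
  refine (hU.hasFDerivAt.comp_hasDerivAt t (hu.prodMk hΛ)).congr_deriv ?_
  rw [hU.fderiv_partial_fst_apply, hU.deriv_partial_snd, hsplit, map_add, map_smul]

end PartialDerivatives

theorem discrete_zero_curvature_implies_evolution_general
    {X A : Type*} [NormedAddCommGroup X] [NormedSpace ℝ X]
    [NormedRing A] [NormedAlgebra ℝ A]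
    (E : A →ₐ[ℝ] A)
    (U V : X × ℝ → A) (K : X → X) (f : ℝ → ℝ)
    (hU : ContDiff ℝ 1 U)
    -- key discrete zero curvature equation: (E V)U − U V = U'[K] + f·U_λ
    (hVK : ∀ (x : X) (l : ℝ),
      E (V (x, l)) * U (x, l) - U (x, l) * V (x, l)
        = fderiv ℝ (fun y => U (y, l)) x (K x)
          + f l • deriv (fun m => U (x, m)) l)
    -- injective property: D_u U(x,λ) is injective for every (x,λ)
    (hinj : ∀ (x : X) (l : ℝ), Function.Injective (fderiv ℝ (fun y => U (y, l)) x))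
    (u : ℝ → X) (Λ : ℝ → ℝ)
    (hu : Differentiable ℝ u)
    (hΛ : ∀ t : ℝ, HasDerivAt Λ (f (Λ t)) t)
    -- discrete zero curvature equation along the curve
    (hzc : ∀ t : ℝ,
      HasDerivAt (fun s => U (u s, Λ s))
        (E (V (u t, Λ t)) * U (u t, Λ t) - U (u t, Λ t) * V (u t, Λ t)) t) :
    ∀ t : ℝ, deriv u t = K (u t) := by
  intro t
  have hchain := (hU.differentiable one_ne_zero (u t, Λ t)).hasDerivAt_comp_prodMk
    (hu t).hasDerivAt (hΛ t)
  -- both sides end in the same term `f (Λ t) • U_λ`; cancelling it leaves `D_u U (u') = D_u U (K u)`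
  have hpartials := (hchain.unique (hzc t)).trans (hVK (u t) (Λ t))
  exact hinj (u t) (Λ t) (add_right_cancel hpartials)

theorem discrete_zero_curvature_implies_evolution
    {X A : Type*} [NormedAddCommGroup X] [NormedSpace ℝ X]
    [NormedRing A] [NormedAlgebra ℝ A]
    (E : A →ₐ[ℝ] A) (hE : Continuous E)
    (U V : X × ℝ → A) (K : X → X) (f : ℝ → ℝ)
    (hU : ContDiff ℝ 1 U)
    -- key discrete zero curvature equation: (E V)U − U V = U'[K] + f·U_λ
    (hVK : ∀ (x : X) (l : ℝ),
      E (V (x, l)) * U (x, l) - U (x, l) * V (x, l)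
        = fderiv ℝ (fun y => U (y, l)) x (K x)
          + f l • deriv (fun m => U (x, m)) l)
    -- injective property: D_u U(x,λ) is injective for every (x,λ)
    (hinj : ∀ (x : X) (l : ℝ), Function.Injective (fderiv ℝ (fun y => U (y, l)) x))
    (u : ℝ → X) (Λ : ℝ → ℝ)
    (hu : Differentiable ℝ u)
    (hΛ : ∀ t : ℝ, HasDerivAt Λ (f (Λ t)) t)
    -- discrete zero curvature equation along the curve
    (hzc : ∀ t : ℝ,
      HasDerivAt (fun s => U (u s, Λ s))
        (E (V (u t, Λ t)) * U (u t, Λ t) - U (u t, Λ t) * V (u t, Λ t)) t) :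
    ∀ t : ℝ, deriv u t = K (u t) :=
  discrete_zero_curvature_implies_evolution_general E U V K f hU hVK hinj u Λ hu hΛ hzc
end

section
/- Let u : ℤ → ℝ and λ ∈ ℝ with λ ≠ 0. Define U : ℤ → M₂(ℝ) by U(n) = [[1, u(n)],[λ⁻¹, 0]] and V₀ : ℤ → M₂(ℝ) by V₀(n) = [[λ/2 − u(n), λ·u(n)],[1, −λ/2 − u(n−1)]]. Then for every n ∈ ℤ: V₀(n+1)·U(n) − U(n)·V₀(n) = [[0, K₀(n)],[0, 0]], where K₀(n) := u(n)·(u(n−1) − u(n+1)). That is, (EV₀)U − UV₀ = U'[K₀], so V₀ is an isospectral (λ_t = 0) Lax operator for the first equation u_t = K₀ = u(u⁽⁻¹⁾ − u⁽¹⁾) of the Volterra-type lattice hierarchy. -/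
open Matrix

section

variable {K : Type*} [Field K]

def volterraU (lam q : K) : Matrix (Fin 2) (Fin 2) K := !![1, q; lam⁻¹, 0]

/-- `volterraV₀ lam p q` is `V₀(n)` with `p = u(n-1)` and `q = u(n)`. -/
def volterraV₀ (lam p q : K) : Matrix (Fin 2) (Fin 2) K := !![lam / 2 - q, lam * q; 1, -(lam / 2) - p]

/-- With `p, q, r` standing for `u(n-1), u(n), u(n+1)` this is `(E V₀) U - U V₀ = U'[K₀]` at `n`. -/
theorem volterraV₀_mul_volterraU_sub_volterraU_mul_volterraV₀ [NeZero (2 : K)] {lam : K}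
    (hlam : lam ≠ 0) (p q r : K) :
    volterraV₀ lam q r * volterraU lam q - volterraU lam q * volterraV₀ lam p q =
      !![0, q * (p - r); 0, 0] := by
  rw [volterraV₀, volterraV₀, volterraU, mul_fin_two, mul_fin_two]
  ext i j
  fin_cases i <;> fin_cases j <;>
    simp only [Fin.zero_eta, Fin.mk_one, Fin.isValue, Matrix.sub_apply, of_apply, cons_val',
      cons_val_zero, cons_val_one, cons_val_fin_one] <;>
    field_simp <;> ring

end

theorem volterra_initial_isospectral_equation
    (u : ℤ → ℝ) (lam : ℝ) (hlam : lam ≠ 0) :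
    ∀ n : ℤ,
      (!![lam/2 - u (n+1), lam * u (n+1); 1, -(lam/2) - u n] : Matrix (Fin 2) (Fin 2) ℝ)
          * (!![1, u n; lam⁻¹, 0] : Matrix (Fin 2) (Fin 2) ℝ)
        - (!![1, u n; lam⁻¹, 0] : Matrix (Fin 2) (Fin 2) ℝ)
          * (!![lam/2 - u n, lam * u n; 1, -(lam/2) - u (n-1)] : Matrix (Fin 2) (Fin 2) ℝ)
      = (!![0, u n * (u (n-1) - u (n+1)); 0, 0] : Matrix (Fin 2) (Fin 2) ℝ) :=
  fun n => volterraV₀_mul_volterraU_sub_volterraU_mul_volterraV₀ hlam (u (n - 1)) (u n) (u (n + 1))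
end

section
/- Let u, X : ℤ → ℝ with u(n) ≠ 0 for all n, and let λ ∈ ℝ, λ ≠ 0. Define U : ℤ → M₂(ℝ) by U(n) = [[1, u(n)],[λ⁻¹, 0]]. Suppose Y, Z : ℤ → ℝ satisfy the antidifference relations Y(n+1) − Y(n) = X(n)/u(n) and Z(n+1) − Z(n) = −u(n+1)·Y(n+2) + u(n)·Y(n) for all n (i.e. Y = (E−1)⁻¹u⁻¹X and Z = (E−1)⁻¹(−u⁽¹⁾E² + u)Y). Define Ω : ℤ → M₂(ℝ) by Ω(n) = [[Z(n), λ·u(n)·Y(n+1)],[Y(n), −λ·Y(n) + Z(n−1)]], and set (ΦX)(n) := u(n)·(Z(n+1) − Z(n−1)). Then for every n ∈ ℤ: Ω(n+1)·U(n) − U(n)·Ω(n) = [[0, (ΦX)(n) − λ·X(n)],[0, 0]]. Since U'[K](n) = [[0, K(n)],[0, 0]], this says Ω solves the characteristic operator equation (EΩ(X))U − UΩ(X) = U'[ΦX] − λ·U'[X] of the Volterra-type spectral problem, where Φ = u(1+E⁻¹)(−u⁽¹⁾E² + u)(E−1)⁻¹u⁻¹ is the recursion operator. -/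
open Matrix

/-! Entrywise, the commutator `Ω(n+1) U(n) - U(n) Ω(n)` is a polynomial identity in the values
of `u`, `Y`, `Z` (with `λ λ⁻¹ = 1`): its only nonzero entries are the top row, namely the defect
of the antidifference relation for `Z` and `u(n) (Z(n+1) - Z(n-1)) - λ u(n) (Y(n+1) - Y(n))`.
The two antidifference relations then kill the first and turn the second into `(ΦX)(n) - λ X(n)`. -/

theorem volterra_commutator_eq {K : Type*} [Field K] (u Y Z : ℤ → K) (lam : K) (hlam : lam ≠ 0)
    (n : ℤ) :
    !![Z (n+1), lam * u (n+1) * Y (n+2); Y (n+1), -(lam * Y (n+1)) + Z n]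
        * !![1, u n; lam⁻¹, 0]
      - !![1, u n; lam⁻¹, 0] * !![Z n, lam * u n * Y (n+1); Y n, -(lam * Y n) + Z (n-1)]
      = !![(Z (n+1) - Z n) - (-(u (n+1)) * Y (n+2) + u n * Y n),
            u n * (Z (n+1) - Z (n-1)) - lam * (u n * (Y (n+1) - Y n)); 0, 0] := by
  rw [mul_fin_two, mul_fin_two]
  ext i j
  fin_cases i <;> fin_cases j <;>
    simp only [Fin.zero_eta, Fin.mk_one, Fin.isValue, Matrix.sub_apply, of_apply, cons_val',
      cons_val_zero, cons_val_one, cons_val_fin_one] <;>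
    field_simp <;> ring

theorem volterra_characteristic_operator_equation
    (u X Y Z : ℤ → ℝ) (hu : ∀ n : ℤ, u n ≠ 0)
    (lam : ℝ) (hlam : lam ≠ 0)
    -- Y = (E−1)⁻¹ u⁻¹ X :  Y(n+1) − Y(n) = X(n)/u(n)
    (hY : ∀ n : ℤ, Y (n+1) - Y n = X n / u n)
    -- Z = (E−1)⁻¹(−u⁽¹⁾E² + u) Y :  Z(n+1) − Z(n) = −u(n+1)·Y(n+2) + u(n)·Y(n)
    (hZ : ∀ n : ℤ, Z (n+1) - Z n = -(u (n+1)) * Y (n+2) + u n * Y n) :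
    ∀ n : ℤ,
      (!![Z (n+1), lam * u (n+1) * Y (n+2);
          Y (n+1), -(lam * Y (n+1)) + Z n] : Matrix (Fin 2) (Fin 2) ℝ)
          * (!![1, u n; lam⁻¹, 0] : Matrix (Fin 2) (Fin 2) ℝ)
        - (!![1, u n; lam⁻¹, 0] : Matrix (Fin 2) (Fin 2) ℝ)
          * (!![Z n, lam * u n * Y (n+1);
                Y n, -(lam * Y n) + Z (n-1)] : Matrix (Fin 2) (Fin 2) ℝ)
      = (!![0, u n * (Z (n+1) - Z (n-1)) - lam * X n; 0, 0] : Matrix (Fin 2) (Fin 2) ℝ) := by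
  intro n
  rw [volterra_commutator_eq u Y Z lam hlam n, hZ n, sub_self, hY n, mul_div_cancel₀ _ (hu n)]
end

section
/- Let p, v : ℤ → ℝ and λ ∈ ℝ. Define U : ℤ → M₂(ℝ) by U(n) = [[0, 1],[−v(n), λ − p(n)]] and W₀ : ℤ → M₂(ℝ) by W₀(n) = [[n − 1, 0],[0, n]] (the diagonal matrix of multiplication operators [n]−1 and [n]). Then for every n ∈ ℤ: W₀(n+1)·U(n) − U(n)·W₀(n) = [[0, 0],[−2v(n), λ − p(n)]]. Since U'[(K₁,K₂)](n) = [[0, 0],[−K₂(n), −K₁(n)]] is the Gateaux derivative of U in direction (K₁,K₂) and U_λ(n) = [[0, 0],[0, 1]] is its λ-derivative, this says that ρ₀ = (p, 2v) and W₀ solve the initial nonisospectral (λ_t = λ) key discrete zero curvature equation (EW₀)U − UW₀ = U'[ρ₀] + λU_λ for the Toda lattice spectral problem. -/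
open Matrix

theorem diagonal_mul_sub_mul_diagonal_fin_two {R : Type*} [CommRing R] (a b a' b' c d : R) :
    !![a', 0; 0, b'] * !![0, 1; c, d] - !![0, 1; c, d] * !![a, 0; 0, b] =
      !![0, a' - b; (b' - a) * c, (b' - b) * d] := by
  rw [mul_fin_two, mul_fin_two, of_sub_of]
  simp only [cons_sub_cons, empty_sub_empty]
  exact congrArg of (vec2_eq (vec2_eq (by ring) (by ring)) (vec2_eq (by ring) (by ring)))

theorem toda_initial_nonisospectral_equation
    (p v : ℤ → ℝ) (lam : ℝ) :
    ∀ n : ℤ,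
      (!![((n : ℝ) + 1) - 1, 0; 0, (n : ℝ) + 1] : Matrix (Fin 2) (Fin 2) ℝ)
          * (!![0, 1; -v n, lam - p n] : Matrix (Fin 2) (Fin 2) ℝ)
        - (!![0, 1; -v n, lam - p n] : Matrix (Fin 2) (Fin 2) ℝ)
          * (!![(n : ℝ) - 1, 0; 0, (n : ℝ)] : Matrix (Fin 2) (Fin 2) ℝ)
      = (!![0, 0; -(2 * v n), -(p n)] : Matrix (Fin 2) (Fin 2) ℝ)
        + lam • (!![0, 0; 0, 1] : Matrix (Fin 2) (Fin 2) ℝ) := by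
  intro n
  rw [diagonal_mul_sub_mul_diagonal_fin_two, smul_of, of_add_of]
  simp only [smul_cons, smul_empty, cons_add_cons, empty_add_empty, smul_eq_mul]
  exact congrArg of (vec2_eq (vec2_eq (by ring) (by ring)) (vec2_eq (by ring) (by ring)))
end

section
/- Let L be a Lie algebra over ℝ, γ ∈ ℝ, and let {K_k}_{k≥0} and {ρ_k}_{k≥0} be families of elements of L satisfying the centreless Virasoro relations: ⁅K_k, K_l⁆ = 0, ⁅K_k, ρ_l⁆ = (k + γ)·K_{k+l}, and ⁅ρ_k, ρ_l⁆ = (k − l)·ρ_{k+l}, for all k, l ≥ 0. Fix k₀ ≥ 0 and t ∈ ℝ, and define the τ-symmetries τ_l := (k₀ + γ)·t·K_{k₀+l} + ρ_l for l ≥ 0. Then the families {K_k} and {τ_l} satisfy the same commutator relations: ⁅K_k, K_l⁆ = 0, ⁅K_k, τ_l⁆ = (k + γ)·K_{k+l}, and ⁅τ_k, τ_l⁆ = (k − l)·τ_{k+l}, for all k, l ≥ 0. -/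
/-! Write `τ_l = ρ_l + c • K_{n+l}`. Since the `K`'s commute, `⁅K_k, τ_l⁆ = ⁅K_k, ρ_l⁆`, and in
`⁅τ_k, τ_l⁆` the cross terms contribute `c • ((n+k+γ) - (n+l+γ)) • K_{n+k+l} = (k-l) • c • K_{n+k+l}`,
which is exactly the correction needed to turn `(k-l) • ρ_{k+l}` into `(k-l) • τ_{k+l}`.
The shift `n` and the coefficient `c` are arbitrary; the paper's choice is `n = k₀`, `c = (k₀+γ)t`. -/

section ShiftedMasterSymmetries

variable {R L : Type*} [CommRing R] [LieRing L] [LieAlgebra R L] {K ρ : ℕ → L}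

theorem lie_smul_shift_add_right (hKK : ∀ k l : ℕ, ⁅K k, K l⁆ = 0) (c : R) (n k l : ℕ) :
    ⁅K k, c • K (n + l) + ρ l⁆ = ⁅K k, ρ l⁆ := by
  rw [lie_add, lie_smul, hKK, smul_zero, zero_add]

theorem lie_smul_shift_add_smul_shift_add {γ : R} (hKK : ∀ k l : ℕ, ⁅K k, K l⁆ = 0)
    (hKρ : ∀ k l : ℕ, ⁅K k, ρ l⁆ = ((k : R) + γ) • K (k + l))
    (hρρ : ∀ k l : ℕ, ⁅ρ k, ρ l⁆ = ((k : R) - (l : R)) • ρ (k + l)) (c : R) (n k l : ℕ) :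
    ⁅c • K (n + k) + ρ k, c • K (n + l) + ρ l⁆ =
      ((k : R) - (l : R)) • (c • K (n + (k + l)) + ρ (k + l)) := by
  have hρK : ⁅ρ k, K (n + l)⁆ = -((((n + l : ℕ) : R) + γ) • K (n + (k + l))) := by
    rw [← lie_skew, hKρ, Nat.add_right_comm, Nat.add_assoc]
  rw [add_lie, smul_lie, lie_smul_shift_add_right hKK, lie_add, lie_smul, hKρ, hρK, hρρ, ← Nat.add_assoc]
  push_cast
  module

end ShiftedMasterSymmetries

theorem tau_symmetries_virasoro_algebra
    {L : Type*} [LieRing L] [LieAlgebra ℝ L]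
    (γ : ℝ) (K ρ : ℕ → L)
    (hKK : ∀ k l : ℕ, ⁅K k, K l⁆ = 0)
    (hKρ : ∀ k l : ℕ, ⁅K k, ρ l⁆ = ((k : ℝ) + γ) • K (k + l))
    (hρρ : ∀ k l : ℕ, ⁅ρ k, ρ l⁆ = ((k : ℝ) - (l : ℝ)) • ρ (k + l))
    (k₀ : ℕ) (t : ℝ)
    (τ : ℕ → L)
    (hτ : ∀ l : ℕ, τ l = (((k₀ : ℝ) + γ) * t) • K (k₀ + l) + ρ l) :
    (∀ k l : ℕ, ⁅K k, K l⁆ = 0)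
    ∧ (∀ k l : ℕ, ⁅K k, τ l⁆ = ((k : ℝ) + γ) • K (k + l))
    ∧ (∀ k l : ℕ, ⁅τ k, τ l⁆ = ((k : ℝ) - (l : ℝ)) • τ (k + l)) := by
  obtain rfl : τ = fun l => (((k₀ : ℝ) + γ) * t) • K (k₀ + l) + ρ l := funext hτ
  refine ⟨hKK, fun k l => ?_, fun k l => ?_⟩
  · rw [lie_smul_shift_add_right hKK, hKρ]
  · exact lie_smul_shift_add_smul_shift_add hKK hKρ hρρ _ k₀ k l
end
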